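/- arXiv:1503.06723 — 2 statements merged into one kernel-verified Lean document; each statement's English description precedes it below -/
import Mathlib

section
/- The model wrinkle map w_s is a submersion at every point outside the set {x = 0, z^2 + |y|^2 = 1}; that is, for every point (y,x,z) with x ≠ 0 or z^2 + |y|^2 ≠ 1, the derivative of w_s at (y,x,z) is surjective onto ℝ^q. -/
/-!
Since `w_s(y, x, z) = (y, h(y, x, z))`, its derivative is onto as soon as the derivative of
the height `h` is nonzero on some vector `(0, ξ, ζ)` tangent to the fibre of `y`. The partial
derivatives there are `∂h/∂x_j = ∓2 x_j` and `∂h/∂z = 3 (z² + |y|² - 1)`, so the first one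
does when `x ≠ 0` and the second one does when `z² + |y|² ≠ 1`.
-/

open Finset

theorem surjective_fderiv_fst_prodMk {𝕜 E F : Type*} [NontriviallyNormedField 𝕜]
    [NormedAddCommGroup E] [NormedSpace 𝕜 E] [NormedAddCommGroup F] [NormedSpace 𝕜 F]
    {f : E × F → 𝕜} {p : E × F} (hf : DifferentiableAt 𝕜 f p) {v : F} {c : 𝕜}
    (hv : HasLineDerivAt 𝕜 f c p (0, v)) (hc : c ≠ 0) :
    Function.Surjective (fderiv 𝕜 (fun p => (p.1, f p)) p) := by
  rw [(hasFDerivAt_fst.prodMk hf.hasFDerivAt).fderiv]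
  set ℓ := fderiv 𝕜 f p
  have hℓv : ℓ (0, v) = c := (hf.hasFDerivAt.hasLineDerivAt _).unique hv
  rintro ⟨a, b⟩
  refine ⟨(a, 0) + ((b - ℓ (a, 0)) / c) • (0, v), Prod.ext (by simp) ?_⟩
  change ℓ _ = b
  rw [map_add, map_smul, hℓv, smul_eq_mul, div_mul_cancel₀ _ hc, add_sub_cancel]

theorem hasDerivAt_sum_sq_add_smul {ι : Type*} (S : Finset ι) (x v : ι → ℝ) :
    HasDerivAt (fun t : ℝ => ∑ i ∈ S, (x + t • v) i ^ 2) (∑ i ∈ S, 2 * x i * v i) 0 := by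
  refine HasDerivAt.fun_sum fun i _ => ?_
  simpa using (((hasDerivAt_id (0 : ℝ)).mul_const (v i)).const_add (x i)).fun_pow 2

/-- The last component of the model wrinkle map `w_s`. -/
def wrinkleHeight {m k : ℕ} (s : ℕ) (p : (Fin m → ℝ) × (Fin k → ℝ) × ℝ) : ℝ :=
  p.2.2 ^ 3 + 3 * ((∑ i, (p.1 i) ^ 2) - 1) * p.2.2
    - ∑ i ∈ univ.filter (fun i : Fin k => (i : ℕ) < s), (p.2.1 i) ^ 2
    + ∑ i ∈ univ.filter (fun i : Fin k => s ≤ (i : ℕ)), (p.2.1 i) ^ 2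

namespace wrinkleHeight

variable {m k : ℕ} (s : ℕ) (p : (Fin m → ℝ) × (Fin k → ℝ) × ℝ)

theorem differentiable : Differentiable ℝ (wrinkleHeight (m := m) (k := k) s) := by
  unfold wrinkleHeight
  fun_prop

theorem hasLineDerivAt_vertical :
    HasLineDerivAt ℝ (wrinkleHeight s) (3 * (p.2.2 ^ 2 + ∑ i, (p.1 i) ^ 2 - 1)) p (0, 0, 1) := by
  have hz : HasDerivAt (fun t : ℝ => p.2.2 + t) 1 0 := (hasDerivAt_id 0).const_add _
  have := (((hz.fun_pow 3).fun_add (hz.const_mul (3 * ((∑ i, (p.1 i) ^ 2) - 1)))).sub_const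
    (∑ i ∈ univ.filter (fun i : Fin k => (i : ℕ) < s), (p.2.1 i) ^ 2)).add_const
    (∑ i ∈ univ.filter (fun i : Fin k => s ≤ (i : ℕ)), (p.2.1 i) ^ 2)
  unfold HasLineDerivAt
  convert this using 1
  · ext t
    simp [wrinkleHeight, mul_assoc]
  · simp only [Nat.cast_ofNat, add_zero, Nat.add_one_sub_one, mul_one]
    ring

theorem hasLineDerivAt_single (j : Fin k) :
    HasLineDerivAt ℝ (wrinkleHeight s) ((if (j : ℕ) < s then -2 else 2) * p.2.1 j) p
      (0, Pi.single j 1, 0) := by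
  have := ((hasDerivAt_const (0 : ℝ) (p.2.2 ^ 3 + 3 * ((∑ i, (p.1 i) ^ 2) - 1) * p.2.2)).fun_sub
    (hasDerivAt_sum_sq_add_smul (univ.filter (fun i : Fin k => (i : ℕ) < s)) p.2.1
      (Pi.single j 1))).fun_add
    (hasDerivAt_sum_sq_add_smul (univ.filter (fun i : Fin k => s ≤ (i : ℕ))) p.2.1
      (Pi.single j 1))
  unfold HasLineDerivAt
  convert this using 1
  · ext t
    simp [wrinkleHeight]
  · split_ifs with hj <;> simp [Pi.single_apply, hj]

end wrinkleHeight

theorem stmt_1_general (q n s : ℕ)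
    (w : ((Fin (q - 1) → ℝ) × (Fin (2 * n) → ℝ) × ℝ) → ((Fin (q - 1) → ℝ) × ℝ))
    (hw : ∀ p : (Fin (q - 1) → ℝ) × (Fin (2 * n) → ℝ) × ℝ,
      w p = (p.1,
        p.2.2 ^ 3 + 3 * ((∑ i, (p.1 i) ^ 2) - 1) * p.2.2
          - ∑ i ∈ univ.filter (fun i : Fin (2 * n) => (i : ℕ) < s), (p.2.1 i) ^ 2
          + ∑ i ∈ univ.filter (fun i : Fin (2 * n) => s ≤ (i : ℕ)), (p.2.1 i) ^ 2)) :
    ∀ p : (Fin (q - 1) → ℝ) × (Fin (2 * n) → ℝ) × ℝ,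
      (p.2.1 ≠ 0 ∨ p.2.2 ^ 2 + ∑ i, (p.1 i) ^ 2 ≠ 1) →
        Function.Surjective (fderiv ℝ w p) := by
  obtain rfl : w = fun p => (p.1, wrinkleHeight s p) := funext hw
  intro p hp
  have hh := wrinkleHeight.differentiable s p
  rcases hp with hx | hyz
  · obtain ⟨j, hj⟩ := Function.ne_iff.1 hx
    refine surjective_fderiv_fst_prodMk hh (wrinkleHeight.hasLineDerivAt_single s p j) ?_
    split_ifs <;> simpa using hj
  · refine surjective_fderiv_fst_prodMk hh (wrinkleHeight.hasLineDerivAt_vertical s p) ?_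
    exact mul_ne_zero three_ne_zero (sub_ne_zero.2 hyz)

/-- The model wrinkle map `w_s` is a submersion at every point outside
`{x = 0, z² + |y|² = 1}`: at every point with `x ≠ 0` or `z² + |y|² ≠ 1`, its
derivative is surjective onto ℝ^q = ℝ^{q-1} × ℝ. -/
theorem stmt_1 (q n s : ℕ) (hq : 1 ≤ q) (hn : 1 ≤ n) (hs : s ≤ 2 * n)
    (w : ((Fin (q - 1) → ℝ) × (Fin (2 * n) → ℝ) × ℝ) → ((Fin (q - 1) → ℝ) × ℝ))
    (hw : ∀ p : (Fin (q - 1) → ℝ) × (Fin (2 * n) → ℝ) × ℝ,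
      w p = (p.1,
        p.2.2 ^ 3 + 3 * ((∑ i, (p.1 i) ^ 2) - 1) * p.2.2
          - ∑ i ∈ univ.filter (fun i : Fin (2 * n) => (i : ℕ) < s), (p.2.1 i) ^ 2
          + ∑ i ∈ univ.filter (fun i : Fin (2 * n) => s ≤ (i : ℕ)), (p.2.1 i) ^ 2)) :
    ∀ p : (Fin (q - 1) → ℝ) × (Fin (2 * n) → ℝ) × ℝ,
      (p.2.1 ≠ 0 ∨ p.2.2 ^ 2 + ∑ i, (p.1 i) ^ 2 ≠ 1) →
        Function.Surjective (fderiv ℝ w p) :=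
  stmt_1_general q n s w hw
end

section
/- For an integer l ≥ 1, the intervals J_i of length 9/(16l) centered at (2i−1)/(2l), i = 1, …, l, are pairwise disjoint subsets of [0,1], and the restriction of γ_l(t) = t + sin(2πlt) to [0,1] ∖ ⋃ J_i has derivative bounded below: γ_l'(t) = 1 + 2πl·cos(2πlt) ≥ l for all t ∈ [0,1] with φ_l(t) = 1 and t ∉ ⋃ J_i. -/
/-!
Rescaling by `l` turns `J i` into the interval of radius `9/32` around the half-integer `i - 1/2`.
Hence for `t ∈ [0,1]` outside every `J i` the point `l * t` lies within `1/2 - 9/32 = 7/32` of an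
integer, so `cos (2πlt) ≥ cos (7π/16) = sin (π/16) > 1/(2π)`, i.e. `2πl cos (2πlt) ≥ l`.
-/

open Set Real

theorem Icc_sub_half_subset_Icc_zero {r : ℝ} (hr : r ≤ 1 / 2) {l i : ℕ} (hi : i ∈ Finset.Icc 1 l) :
    Icc ((i : ℝ) - 1 / 2 - r) (i - 1 / 2 + r) ⊆ Icc 0 (l : ℝ) := by
  obtain ⟨h1, hil⟩ := Finset.mem_Icc.1 hi
  have h1' : (1 : ℝ) ≤ i := by exact_mod_cast h1
  have hil' : (i : ℝ) ≤ l := by exact_mod_cast hil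
  exact Icc_subset_Icc (by linarith) (by linarith)

theorem pairwise_disjoint_Icc_sub_half {r : ℝ} (hr : r < 1 / 2) :
    Pairwise (Function.onFun Disjoint fun i : ℕ => Icc ((i : ℝ) - 1 / 2 - r) (i - 1 / 2 + r)) := by
  have key : ∀ i j : ℕ, i < j → Disjoint (Icc ((i : ℝ) - 1 / 2 - r) (i - 1 / 2 + r))
      (Icc ((j : ℝ) - 1 / 2 - r) (j - 1 / 2 + r)) := by
    intro i j hij
    have : (i : ℝ) + 1 ≤ j := by exact_mod_cast hij
    exact (Iic_disjoint_Ici.2 (by linarith)).mono Icc_subset_Iic_self Icc_subset_Ici_self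
  intro i j hij
  rcases hij.lt_or_gt with h | h
  · exact key i j h
  · exact (key j i h).symm

theorem abs_sub_round_le_of_forall_notMem_Icc {r u : ℝ} {l : ℕ} (hr₀ : 0 ≤ r) (hr : r ≤ 1 / 2)
    (hu : u ∈ Icc 0 (l : ℝ))
    (havoid : ∀ i ∈ Finset.Icc 1 l, u ∉ Icc ((i : ℝ) - 1 / 2 - r) (i - 1 / 2 + r)) :
    |u - round u| ≤ 1 / 2 - r := by
  obtain ⟨hk₁, hk₂⟩ := abs_le.1 (abs_sub_round u)
  have hk₀ : 0 ≤ round u := by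
    have : (-1 : ℝ) < round u := by linarith [hu.1]
    have : (-1 : ℤ) < round u := by exact_mod_cast this
    omega
  obtain ⟨k, hk⟩ := Int.eq_ofNat_of_zero_le hk₀
  rw [hk] at hk₁ hk₂ ⊢
  push_cast at hk₁ hk₂ ⊢
  refine abs_le.2 ⟨?_, ?_⟩
  all_goals by_contra! h
  · have hk1 : 1 ≤ k := by
      have : (0 : ℝ) < k := by linarith [hu.1]
      exact_mod_cast this
    have hkl : k ≤ l := by
      have : (k : ℝ) < l + 1 := by linarith [hu.2]
      exact_mod_cast Nat.lt_succ_iff.1 (by exact_mod_cast this)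
    exact havoid k (Finset.mem_Icc.2 ⟨hk1, hkl⟩) ⟨(sub_le_self _ hr₀).trans (by linarith), by linarith⟩
  · have hkl : k + 1 ≤ l := by
      have : (k : ℝ) < l := by linarith [hu.2]
      exact_mod_cast this
    exact havoid (k + 1) (Finset.mem_Icc.2 ⟨by omega, hkl⟩)
      ⟨by push_cast; linarith, by push_cast; linarith⟩

theorem cos_two_pi_mul_le_cos_two_pi_mul_of_abs_sub_int_le {x δ : ℝ} {k : ℤ} (hδ : δ ≤ 1 / 2)
    (hx : |x - k| ≤ δ) : cos (2 * π * δ) ≤ cos (2 * π * x) := by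
  have hperiod : cos (2 * π * x) = cos |2 * π * (x - k)| := by
    rw [cos_abs, ← cos_sub_int_mul_two_pi (2 * π * x) k]
    ring_nf
  rw [hperiod]
  refine cos_le_cos_of_nonneg_of_le_pi (abs_nonneg _) (by nlinarith [pi_pos]) ?_
  rw [abs_mul, abs_of_pos (by positivity)]
  exact mul_le_mul_of_nonneg_left hx (by positivity)

theorem one_div_two_pi_lt_sin_pi_div_sixteen : 1 / (2 * π) < sin (π / 16) := by
  have hcube : (π / 16) ^ 3 ≤ (1 / 4) ^ 3 :=
    pow_le_pow_left₀ (by positivity) (by linarith [pi_lt_four]) 3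
  have hinv : 1 / (2 * π) < 1 / 6 :=
    one_div_lt_one_div_of_lt (by norm_num) (by linarith [pi_gt_three])
  linarith [sin_gt_sub_cube (x := π / 16) (by positivity), pi_gt_three]

theorem one_div_two_pi_lt_cos_two_pi_mul_of_abs_sub_int_le {x : ℝ} {k : ℤ}
    (hx : |x - k| ≤ 7 / 32) : 1 / (2 * π) < cos (2 * π * x) :=
  calc 1 / (2 * π) < sin (π / 16) := one_div_two_pi_lt_sin_pi_div_sixteen
    _ = cos (2 * π * (7 / 32)) := by rw [← cos_pi_div_two_sub]; ring_nf
    _ ≤ cos (2 * π * x) := cos_two_pi_mul_le_cos_two_pi_mul_of_abs_sub_int_le (by norm_num) hx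

theorem stmt_18_general (l : ℕ)
    (J : ℕ → Set ℝ)
    (hJ : ∀ i, J i = Icc ((2 * (i : ℝ) - 1) / (2 * l) - 9 / (32 * l))
      ((2 * (i : ℝ) - 1) / (2 * l) + 9 / (32 * l)))
    (φ : ℝ → ℝ) :
    (∀ i ∈ Finset.Icc 1 l, J i ⊆ Icc (0 : ℝ) 1) ∧
      (∀ i ∈ Finset.Icc 1 l, ∀ j ∈ Finset.Icc 1 l, i ≠ j → Disjoint (J i) (J j)) ∧
      ∀ t ∈ Icc (0 : ℝ) 1, φ t = 1 → t ∉ ⋃ i ∈ Finset.Icc 1 l, J i →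
        (l : ℝ) ≤ 1 + 2 * π * l * Real.cos (2 * π * l * t) := by
  have hl_pos : ∀ i ∈ Finset.Icc 1 l, (0 : ℝ) < l := fun i hi => by
    have := Finset.mem_Icc.1 hi
    exact_mod_cast this.1.trans this.2
  have hJ_preimage : ∀ i ∈ Finset.Icc 1 l,
      J i = ((l : ℝ) * ·) ⁻¹' Icc ((i : ℝ) - 1 / 2 - 9 / 32) (i - 1 / 2 + 9 / 32) := fun i hi => by
    rw [hJ, preimage_const_mul_Icc₀ _ _ (hl_pos i hi)]
    congr 1 <;> ring
  refine ⟨fun i hi => ?_, fun i hi j hj hij => ?_, fun t ht _ htJ => ?_⟩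
  · rw [hJ_preimage i hi]
    refine (preimage_mono (Icc_sub_half_subset_Icc_zero (by norm_num) hi)).trans ?_
    rw [preimage_const_mul_Icc₀ _ _ (hl_pos i hi), zero_div, div_self (hl_pos i hi).ne']
  · rw [hJ_preimage i hi, hJ_preimage j hj]
    exact (pairwise_disjoint_Icc_sub_half (by norm_num) hij).preimage _
  · have hlt : (l : ℝ) * t ∈ Icc 0 (l : ℝ) :=
      ⟨mul_nonneg (Nat.cast_nonneg l) ht.1, mul_le_of_le_one_right (Nat.cast_nonneg l) ht.2⟩
    have hround : |(l : ℝ) * t - round ((l : ℝ) * t)| ≤ 1 / 2 - 9 / 32 :=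
      abs_sub_round_le_of_forall_notMem_Icc (by norm_num) (by norm_num) hlt fun i hi hmem =>
        htJ (mem_iUnion₂.2 ⟨i, hi, by rw [hJ_preimage i hi]; exact hmem⟩)
    have hcos : 1 / (2 * π) < cos (2 * π * l * t) := by
      rw [mul_assoc (2 * π)]
      exact one_div_two_pi_lt_cos_two_pi_mul_of_abs_sub_int_le (hround.trans_eq (by norm_num))
    have hscaled : (l : ℝ) ≤ 2 * π * l * cos (2 * π * l * t) :=
      calc (l : ℝ) = 2 * π * l * (1 / (2 * π)) := by field_simp
        _ ≤ 2 * π * l * cos (2 * π * l * t) := by gcongr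
    linarith

/-- For `l ≥ 1`, the intervals `J_i` of length `9/(16l)` centered at
`(2i−1)/(2l)`, `i = 1,…,l`, are pairwise disjoint subsets of `[0,1]`, and on the region
where the cutoff `φ_l` equals `1`, the derivative `γ_l'(t) = 1 + 2πl·cos(2πlt)` of
`γ_l(t) = t + sin(2πlt)` satisfies `γ_l'(t) ≥ l` for all `t ∈ [0,1] ∖ ⋃ J_i`. -/
theorem stmt_18 (l : ℕ) (hl : 1 ≤ l)
    (J : ℕ → Set ℝ)
    (hJ : ∀ i, J i = Icc ((2 * (i : ℝ) - 1) / (2 * l) - 9 / (32 * l))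
      ((2 * (i : ℝ) - 1) / (2 * l) + 9 / (32 * l)))
    (φ : ℝ → ℝ)
    (hφone : ∀ t ∈ Icc (1 / (8 * (l : ℝ))) (1 - 1 / (8 * (l : ℝ))), φ t = 1)
    (hφzero : ∀ t, t ∉ Icc (1 / (16 * (l : ℝ))) (1 - 1 / (16 * (l : ℝ))) → φ t = 0) :
    (∀ i ∈ Finset.Icc 1 l, J i ⊆ Icc (0 : ℝ) 1) ∧
      (∀ i ∈ Finset.Icc 1 l, ∀ j ∈ Finset.Icc 1 l, i ≠ j → Disjoint (J i) (J j)) ∧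
      ∀ t ∈ Icc (0 : ℝ) 1, φ t = 1 → t ∉ ⋃ i ∈ Finset.Icc 1 l, J i →
        (l : ℝ) ≤ 1 + 2 * π * l * Real.cos (2 * π * l * t) :=
  stmt_18_general l J hJ φ
end
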